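/- Hardy's inequality: for n ≥ 3 and f ∈ Ḣ¹(ℝⁿ), one has ‖f(x)/|x|‖_{L²(ℝⁿ)} ≲ ‖∇f‖_{L²(ℝⁿ)}. -/

import Mathlib

/-!
In polar coordinates `x = r • ω` the inequality reduces, ray by ray, to the weighted
one-dimensional Hardy inequality `∫₀^∞ r^k ‖g‖² ≤ (2/(k+1))² ∫₀^∞ r^(k+2) ‖g'‖²` with
`k = n - 3`, where `‖g'‖` is bounded by the full gradient. On the half line, the derivative
`(k+1) r^k ‖g‖² + 2 r^(k+1) ⟪g, g'⟫` of `r^(k+1) ‖g‖²` integrates to zero (both boundary terms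
vanish), and Young's inequality on the cross term leaves
`(k+1)/2 ∫ r^k ‖g‖² ≤ 2/(k+1) ∫ r^(k+2) ‖g'‖²`.
-/

open Set Filter Metric MeasureTheory SchwartzMap
open scoped ENNReal RealInnerProductSpace

section Polar

variable {E : Type*} [NormedAddCommGroup E] [NormedSpace ℝ E] [MeasurableSpace E] [BorelSpace E]
  [FiniteDimensional ℝ E] [Nontrivial E]

theorem lintegral_eq_lintegral_toSphere_lintegral_Ioi (μ : Measure E) [μ.IsAddHaarMeasure]
    {G : E → ℝ≥0∞} (hG : Measurable G) :
    ∫⁻ x, G x ∂μ = ∫⁻ ω : sphere (0 : E) 1, (∫⁻ r in Ioi (0 : ℝ),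
      ENNReal.ofReal (r ^ (Module.finrank ℝ E - 1)) * G (r • (ω : E))) ∂μ.toSphere := by
  have hpunctured : ∫⁻ x, G x ∂μ = ∫⁻ x : ({0}ᶜ : Set E), G x ∂(μ.comap Subtype.val) := by
    rw [lintegral_subtype_comap (measurableSet_singleton _).compl, restrict_compl_singleton]
  have hprod : ∫⁻ x : ({0}ᶜ : Set E), G x ∂(μ.comap Subtype.val)
      = ∫⁻ p : sphere (0 : E) 1 × Ioi (0 : ℝ), G ((p.2 : ℝ) • (p.1 : E))
        ∂(μ.toSphere.prod (Measure.volumeIoiPow (Module.finrank ℝ E - 1))) := by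
    rw [← μ.measurePreserving_homeomorphUnitSphereProd.lintegral_comp
      (by exact hG.comp (by fun_prop))]
    refine lintegral_congr fun x => ?_
    simp [smul_inv_smul₀ (norm_ne_zero_iff.2 x.2)]
  rw [hpunctured, hprod, lintegral_prod _ (by exact (hG.comp (by fun_prop)).aemeasurable)]
  refine lintegral_congr fun ω => ?_
  rw [Measure.volumeIoiPow, lintegral_withDensity_eq_lintegral_mul _ (by fun_prop)
    (by exact hG.comp (by fun_prop))]
  exact lintegral_subtype_comap measurableSet_Ioi
    (fun r => ENNReal.ofReal (r ^ (Module.finrank ℝ E - 1)) * G (r • (ω : E)))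

end Polar

namespace SchwartzMap

theorem integrable_pow_mul_norm_mul_norm {V W : Type*} [NormedAddCommGroup V] [NormedSpace ℝ V]
    [NormedAddCommGroup W] [NormedSpace ℝ W] (g : 𝓢(ℝ, V)) (h : 𝓢(ℝ, W)) (k : ℕ) :
    Integrable (fun r : ℝ => r ^ k * (‖g r‖ * ‖h r‖)) := by
  refine ((h.integrable_pow_mul volume k).const_mul (SchwartzMap.seminorm ℝ 0 0 g)).mono'
    (by fun_prop) (Eventually.of_forall fun r => ?_)
  simp only [norm_mul, norm_pow, norm_norm]
  calc ‖r‖ ^ k * (‖g r‖ * ‖h r‖) ≤ ‖r‖ ^ k * (SchwartzMap.seminorm ℝ 0 0 g * ‖h r‖) := by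
        gcongr; exact norm_le_seminorm ℝ g r
    _ = _ := by ring

variable {F : Type*} [NormedAddCommGroup F] [InnerProductSpace ℝ F]

theorem neg_pow_mul_two_mul_inner_le (a b : F) {m r : ℝ} (hm : 0 < m) (hr : 0 ≤ r) (k : ℕ) :
    -(r ^ (k + 1) * (2 * ⟪a, b⟫)) ≤
      m / 2 * (r ^ k * ‖a‖ ^ 2) + 2 / m * (r ^ (k + 2) * ‖b‖ ^ 2) := by
  have hsq : 0 ≤ r ^ k / m * (m * ‖a‖ - 2 * r * ‖b‖) ^ 2 := by positivity
  have hcs : 0 ≤ r ^ (k + 1) * (⟪a, b⟫ + ‖a‖ * ‖b‖) :=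
    mul_nonneg (by positivity) (by linarith [neg_le_of_abs_le (abs_real_inner_le_norm a b)])
  have hexpand : r ^ k / m * (m * ‖a‖ - 2 * r * ‖b‖) ^ 2 =
      m * (r ^ k * ‖a‖ ^ 2) - 4 * (r ^ (k + 1) * (‖a‖ * ‖b‖)) +
        4 / m * (r ^ (k + 2) * ‖b‖ ^ 2) := by
    field_simp; ring
  rw [hexpand] at hsq
  linear_combination (1 / 2) * hsq + 2 * hcs

theorem integral_Ioi_pow_mul_norm_sq_le (g : 𝓢(ℝ, F)) (k : ℕ) :
    ∫ r in Ioi 0, r ^ k * ‖g r‖ ^ 2 ≤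
      (2 / (k + 1)) ^ 2 * ∫ r in Ioi 0, r ^ (k + 2) * ‖deriv g r‖ ^ 2 := by
  set m : ℝ := k + 1
  have hm : 0 < m := by positivity
  set g' := derivCLM ℝ F g
  change _ ≤ (2 / m) ^ 2 * ∫ r in Ioi 0, r ^ (k + 2) * ‖g' r‖ ^ 2
  set F' : ℝ → ℝ := fun r => m * r ^ k * ‖g r‖ ^ 2 + r ^ (k + 1) * (2 * ⟪g r, g' r⟫)
  have hderiv : ∀ r, HasDerivAt (fun r => r ^ (k + 1) * ‖g r‖ ^ 2) (F' r) r := fun r =>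
    ((hasDerivAt_pow (k + 1) r).mul (g.hasDerivAt r).norm_sq).congr_deriv (by simp [F', m, g'])
  have hint_g : ∀ j, Integrable (fun r : ℝ => r ^ j * ‖g r‖ ^ 2) := fun j => by
    simpa [sq] using g.integrable_pow_mul_norm_mul_norm g j
  have hint_g' : Integrable (fun r : ℝ => r ^ (k + 2) * ‖g' r‖ ^ 2) := by
    simpa [sq] using g'.integrable_pow_mul_norm_mul_norm g' (k + 2)
  have hinner : Integrable (fun r : ℝ => r ^ (k + 1) * (2 * ⟪g r, g' r⟫)) := by
    refine ((g.integrable_pow_mul_norm_mul_norm g' (k + 1)).norm.const_mul 2).mono' (by fun_prop)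
      (Eventually.of_forall fun r => ?_)
    simp only [norm_mul, Real.norm_ofNat, norm_norm]
    have := abs_real_inner_le_norm (g r) (g' r)
    rw [← Real.norm_eq_abs] at this
    calc ‖r ^ (k + 1)‖ * (2 * ‖⟪g r, g' r⟫‖)
        ≤ ‖r ^ (k + 1)‖ * (2 * (‖g r‖ * ‖g' r‖)) := by gcongr
      _ = _ := by ring
  have hF' : Integrable F' := ((hint_g k).const_mul m).add hinner |>.congr
    (Eventually.of_forall fun r => by simp only [F', Pi.add_apply, mul_assoc])
  have hzero : ∫ r in Ioi 0, F' r = 0 := by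
    have hlim := tendsto_zero_of_hasDerivAt_of_integrableOn_Ioi (a := 0)
      (fun r _ => hderiv r) hF'.integrableOn (hint_g (k + 1)).integrableOn
    rw [integral_Ioi_of_hasDerivAt_of_tendsto' (fun r _ => hderiv r) hF'.integrableOn hlim]
    simp
  have hyoung := setIntegral_mono_on
      (((hint_g k).const_mul (m / 2)).sub (hint_g'.const_mul (2 / m))).integrableOn
      hF'.integrableOn measurableSet_Ioi
      fun r (hr : 0 < r) => by
        have := neg_pow_mul_two_mul_inner_le (g r) (g' r) hm hr.le k
        simp only [Pi.sub_apply, F']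
        linarith
  simp only [Pi.sub_apply] at hyoung
  rw [hzero, integral_sub ((hint_g k).integrableOn.const_mul _) (hint_g'.integrableOn.const_mul _),
    integral_const_mul, integral_const_mul, sub_nonpos] at hyoung
  calc ∫ r in Ioi 0, r ^ k * ‖g r‖ ^ 2
      = 2 / m * (m / 2 * ∫ r in Ioi 0, r ^ k * ‖g r‖ ^ 2) := by field_simp
    _ ≤ 2 / m * (2 / m * ∫ r in Ioi 0, r ^ (k + 2) * ‖g' r‖ ^ 2) := by gcongr
    _ = _ := by ring

theorem lintegral_Ioi_pow_mul_norm_sq_le (g : 𝓢(ℝ, F)) (k : ℕ) :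
    ∫⁻ r in Ioi 0, ENNReal.ofReal (r ^ k * ‖g r‖ ^ 2) ≤
      ENNReal.ofReal ((2 / (k + 1)) ^ 2) *
        ∫⁻ r in Ioi 0, ENNReal.ofReal (r ^ (k + 2) * ‖deriv g r‖ ^ 2) := by
  have hint : IntegrableOn (fun r : ℝ => r ^ k * ‖g r‖ ^ 2) (Ioi 0) := by
    simpa [sq] using (g.integrable_pow_mul_norm_mul_norm g k).integrableOn
  rw [← ofReal_integral_eq_lintegral_ofReal hint
    ((ae_restrict_mem measurableSet_Ioi).mono fun r (hr : 0 < r) => by positivity)]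
  calc ENNReal.ofReal (∫ r in Ioi 0, r ^ k * ‖g r‖ ^ 2)
      ≤ ENNReal.ofReal ((2 / (k + 1)) ^ 2 * ∫ r in Ioi 0, r ^ (k + 2) * ‖deriv g r‖ ^ 2) :=
        ENNReal.ofReal_le_ofReal (integral_Ioi_pow_mul_norm_sq_le g k)
    _ ≤ _ := by
      rw [ENNReal.ofReal_mul (by positivity), integral_eq_lintegral_of_nonneg_ae
        (f := fun r => r ^ (k + 2) * ‖deriv g r‖ ^ 2)
        ((ae_restrict_mem measurableSet_Ioi).mono fun r (hr : 0 < r) => by positivity)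
        ((continuous_pow _).mul ((derivCLM ℝ F g).continuous.norm.pow 2)).aestronglyMeasurable]
      gcongr
      exact ENNReal.ofReal_toReal_le

variable {E : Type*} [NormedAddCommGroup E] [NormedSpace ℝ E]

noncomputable def restrictRay (f : 𝓢(E, F)) {ω : E} (hω : ‖ω‖ = 1) : 𝓢(ℝ, F) :=
  compCLM ℝ (ContinuousLinearMap.toSpanSingleton ℝ ω).hasTemperateGrowth
    ⟨1, 1, fun t => by simp [norm_smul, hω]⟩ f

@[simp]
theorem restrictRay_apply (f : 𝓢(E, F)) {ω : E} (hω : ‖ω‖ = 1) (t : ℝ) :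
    f.restrictRay hω t = f (t • ω) := rfl

theorem norm_deriv_restrictRay_le (f : 𝓢(E, F)) {ω : E} (hω : ‖ω‖ = 1) (r : ℝ) :
    ‖deriv (f.restrictRay hω) r‖ ≤ ‖fderiv ℝ f (r • ω)‖ := by
  have hray : HasDerivAt (f.restrictRay hω) (fderiv ℝ f (r • ω) ω) r :=
    (f.hasFDerivAt (r • ω)).comp_hasDerivAt r
      ((hasDerivAt_id r).smul_const ω |>.congr_deriv (one_smul ℝ ω))
  rw [hray.deriv]
  simpa [hω] using (fderiv ℝ f (r • ω)).le_opNorm ω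

variable [MeasurableSpace E] [BorelSpace E] [FiniteDimensional ℝ E]

theorem lintegral_norm_sq_div_norm_sq_le (μ : Measure E) [μ.IsAddHaarMeasure] {k : ℕ}
    (hk : Module.finrank ℝ E = k + 3) (f : 𝓢(E, F)) :
    ∫⁻ x, ENNReal.ofReal (‖f x‖ ^ 2 / ‖x‖ ^ 2) ∂μ ≤
      ENNReal.ofReal ((2 / (k + 1)) ^ 2) * ∫⁻ x, ENNReal.ofReal (‖fderiv ℝ f x‖ ^ 2) ∂μ := by
  have : Nontrivial E := Module.nontrivial_of_finrank_eq_succ hk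
  rw [lintegral_eq_lintegral_toSphere_lintegral_Ioi μ (by fun_prop),
    lintegral_eq_lintegral_toSphere_lintegral_Ioi μ
      (G := fun x => ENNReal.ofReal (‖fderiv ℝ f x‖ ^ 2))
      ((fderivCLM ℝ E F f).continuous.norm.pow 2).measurable.ennreal_ofReal,
    ← lintegral_const_mul' _ _ ENNReal.ofReal_ne_top, hk, show k + 3 - 1 = k + 2 from rfl]
  refine lintegral_mono fun ω => ?_
  have hω : ‖(ω : E)‖ = 1 := norm_eq_of_mem_sphere ω
  calc ∫⁻ r in Ioi 0,
        ENNReal.ofReal (r ^ (k + 2)) * ENNReal.ofReal (‖f (r • ω)‖ ^ 2 / ‖r • (ω : E)‖ ^ 2)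
      = ∫⁻ r in Ioi 0, ENNReal.ofReal (r ^ k * ‖f.restrictRay hω r‖ ^ 2) := by
        refine setLIntegral_congr_fun measurableSet_Ioi fun r (hr : 0 < r) => ?_
        rw [← ENNReal.ofReal_mul (by positivity), norm_smul, hω, Real.norm_of_nonneg hr.le]
        simp only [mul_one, restrictRay_apply, pow_add r k 2]
        field_simp
    _ ≤ ENNReal.ofReal ((2 / (k + 1)) ^ 2) *
          ∫⁻ r in Ioi 0, ENNReal.ofReal (r ^ (k + 2) * ‖deriv (f.restrictRay hω) r‖ ^ 2) :=
        lintegral_Ioi_pow_mul_norm_sq_le _ k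
    _ ≤ _ := by
        refine mul_le_mul_of_nonneg_left
          (setLIntegral_mono' measurableSet_Ioi fun r (hr : 0 < r) => ?_) zero_le
        rw [← ENNReal.ofReal_mul (by positivity)]
        gcongr
        exact norm_deriv_restrictRay_le f hω r

theorem integral_norm_sq_div_norm_sq_le (μ : Measure E) [μ.IsAddHaarMeasure] {k : ℕ}
    (hk : Module.finrank ℝ E = k + 3) (f : 𝓢(E, F)) :
    ∫ x, ‖f x‖ ^ 2 / ‖x‖ ^ 2 ∂μ ≤ (2 / (k + 1)) ^ 2 * ∫ x, ‖fderiv ℝ f x‖ ^ 2 ∂μ := by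
  have hDf : Integrable (fun x => ‖fderiv ℝ f x‖ ^ 2) μ :=
    ((fderivCLM ℝ E F f).memLp 2 μ).integrable_norm_pow two_ne_zero
  have hmeas : Measurable fun x => ‖f x‖ ^ 2 / ‖x‖ ^ 2 := by fun_prop
  rw [integral_eq_lintegral_of_nonneg_ae (ae_of_all _ fun x => by positivity)
      hmeas.aestronglyMeasurable,
    integral_eq_lintegral_of_nonneg_ae (ae_of_all _ fun x => by positivity)
      hDf.aestronglyMeasurable,
    ← ENNReal.toReal_ofReal (by positivity : (0 : ℝ) ≤ (2 / (k + 1)) ^ 2), ← ENNReal.toReal_mul]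
  exact ENNReal.toReal_mono (ENNReal.mul_ne_top ENNReal.ofReal_ne_top hDf.lintegral_lt_top.ne)
    (lintegral_norm_sq_div_norm_sq_le μ hk f)

end SchwartzMap

/-- Hardy's inequality in dimension `n ≥ 3`:
`‖f(x)/|x|‖_{L²} ≲ ‖∇f‖_{L²}` for Schwartz `f`. -/
theorem stmt2 (n : ℕ) (hn : 3 ≤ n) :
    ∃ C > 0, ∀ f : SchwartzMap (EuclideanSpace ℝ (Fin n)) ℂ,
      Real.sqrt (∫ x : EuclideanSpace ℝ (Fin n), ‖f x‖ ^ 2 / ‖x‖ ^ 2) ≤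
        C * Real.sqrt (∫ x : EuclideanSpace ℝ (Fin n), ‖fderiv ℝ (⇑f) x‖ ^ 2) := by
  obtain ⟨k, rfl⟩ := Nat.exists_eq_add_of_le' hn
  refine ⟨2 / (k + 1), by positivity, fun f => ?_⟩
  rw [← Real.sqrt_sq (by positivity : (0 : ℝ) ≤ 2 / (k + 1)), ← Real.sqrt_mul (by positivity)]
  exact Real.sqrt_le_sqrt (f.integral_norm_sq_div_norm_sq_le volume finrank_euclideanSpace_fin)
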